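/- Let p : [0, 1/3] → ℝ be continuous. Then for every x ∈ [0,1]: if x ≤ 2/3, then ∫_{1−x}^{1} p(min(1−x, 1−y, x+y−1)) dy = 2·∫₀^{x/2} p(t) dt; and if x ≥ 2/3, then ∫_{1−x}^{1} p(min(1−x, 1−y, x+y−1)) dy = (3x−2)·p(1−x) + 2·∫₀^{1−x} p(t) dt. -/

import Mathlib

/-!
After the shift `y ↦ y - (1 - x)` the integrand is `p ∘ T` on `[0, x]`, where
`T y = min (1 - x) (min (x - y) y)` is a tent of slope one capped at height `1 - x`.
The tent is symmetric about `x / 2`, so the integral is twice the one over `[0, x / 2]`,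
where `T y = min (1 - x) y`. The cap is inactive there exactly when `x / 2 ≤ 1 - x`, i.e.
`x ≤ 2/3`; otherwise `p ∘ T` is `p` up to `1 - x` and the constant `p (1 - x)` beyond.
-/

open Set intervalIntegral

section

variable {E : Type*} [NormedAddCommGroup E] [NormedSpace ℝ E]

theorem intervalIntegral.integral_eq_two_nsmul_of_symmetric {f : ℝ → E} {a b : ℝ}
    (hf : IntervalIntegrable f MeasureTheory.volume a b) (hsymm : ∀ y, f (a + b - y) = f y) :
    ∫ y in a..b, f y = 2 • ∫ y in a..(a + b) / 2, f y := by
  have hmid : (a + b) / 2 ∈ uIcc a b := by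
    rcases le_total a b with h | h
    · rw [uIcc_of_le h]; constructor <;> linarith
    · rw [uIcc_of_ge h]; constructor <;> linarith
  have hupper : ∫ y in (a + b) / 2..b, f y = ∫ y in a..(a + b) / 2, f y := by
    calc ∫ y in (a + b) / 2..b, f y = ∫ y in (a + b) / 2..b, f (a + b - y) :=
          integral_congr fun y _ => (hsymm y).symm
      _ = ∫ y in a..(a + b) / 2, f y := by
          rw [integral_comp_sub_left]; congr 1 <;> ring
  rw [← integral_add_adjacent_intervals (hf.mono_set (uIcc_subset_uIcc_left hmid))
    (hf.mono_set (uIcc_subset_uIcc_right hmid)), hupper, two_nsmul]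

theorem intervalIntegral.integral_comp_min_const [CompleteSpace E] {f : ℝ → E} {a h c : ℝ}
    (hah : a ≤ h) (hhc : h ≤ c) (hf : IntervalIntegrable f MeasureTheory.volume a h) :
    ∫ y in a..c, f (min h y) = (∫ y in a..h, f y) + (c - h) • f h := by
  have below : EqOn (fun y => f (min h y)) f (uIcc a h) := by
    intro y hy
    rw [uIcc_of_le hah] at hy
    simp only [min_eq_right hy.2]
  have above : EqOn (fun y => f (min h y)) (fun _ => f h) (uIcc h c) := by
    intro y hy
    rw [uIcc_of_le hhc] at hy
    simp only [min_eq_left hy.1]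
  rw [← integral_add_adjacent_intervals
      (hf.congr (below.symm.mono uIoc_subset_uIcc))
      (intervalIntegrable_const.congr (above.symm.mono uIoc_subset_uIcc)),
    integral_congr below, integral_congr above, integral_const]

theorem intervalIntegral.integral_comp_capped_tent {f : ℝ → E} {h L : ℝ}
    (hh : 0 ≤ h) (hL : 0 ≤ L) (hf : ContinuousOn f (Icc 0 (min h (L / 2)))) :
    ∫ y in 0..L, f (min h (min (L - y) y)) = 2 • ∫ y in 0..L / 2, f (min h y) := by
  have tent_mapsTo : MapsTo (fun y => min h (min (L - y) y)) (Icc 0 L) (Icc 0 (min h (L / 2))) := by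
    rintro y ⟨hy0, hyL⟩
    refine ⟨le_min hh (le_min (by linarith) hy0), min_le_min_left h ?_⟩
    rcases le_total y (L / 2) with hy | hy
    · exact (min_le_right _ _).trans hy
    · exact (min_le_left _ _).trans (by linarith)
  have hint : IntervalIntegrable (fun y => f (min h (min (L - y) y))) MeasureTheory.volume 0 L :=
    ((hf.comp (by fun_prop) tent_mapsTo).mono (by rw [uIcc_of_le hL])).intervalIntegrable
  have tent_symm :
      ∀ y, f (min h (min (L - (0 + L - y)) (0 + L - y))) = f (min h (min (L - y) y)) := by
    intro y
    rw [zero_add, sub_sub_cancel, min_comm y]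
  rw [integral_eq_two_nsmul_of_symmetric hint tent_symm, zero_add]
  congr 1
  refine integral_congr fun y hy => ?_
  rw [uIcc_of_le (by linarith)] at hy
  simp only [min_eq_right (by linarith [hy.2] : y ≤ L - y)]

end

theorem layered_projection (p : ℝ → ℝ) (hp : ContinuousOn p (Set.Icc (0 : ℝ) (1/3))) :
    ∀ x ∈ Set.Icc (0 : ℝ) 1,
      (x ≤ 2/3 →
        (∫ y in (1 - x)..1, p (min (1 - x) (min (1 - y) (x + y - 1)))) =
          2 * ∫ t in (0 : ℝ)..(x/2), p t) ∧
      (2/3 ≤ x →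
        (∫ y in (1 - x)..1, p (min (1 - x) (min (1 - y) (x + y - 1)))) =
          (3*x - 2) * p (1 - x) + 2 * ∫ t in (0 : ℝ)..(1 - x), p t) := by
  rintro x ⟨hx0, hx1⟩
  have shift : ∫ y in (1 - x)..1, p (min (1 - x) (min (1 - y) (x + y - 1))) =
      ∫ y in (0 : ℝ)..x, p (min (1 - x) (min (x - y) y)) := by
    calc _ = ∫ y in (1 - x)..1, p (min (1 - x) (min (x - (y - (1 - x))) (y - (1 - x)))) :=
          integral_congr fun y _ => by ring_nf
      _ = _ := by rw [integral_comp_sub_right fun y => p (min (1 - x) (min (x - y) y))]; norm_num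
  have hp_cap : ContinuousOn p (Icc 0 (min (1 - x) (x / 2))) :=
    hp.mono (Icc_subset_Icc_right (by rw [min_le_iff]; by_contra! ⟨h₁, h₂⟩; linarith))
  rw [shift, integral_comp_capped_tent (by linarith) hx0 hp_cap, nsmul_eq_mul, Nat.cast_ofNat]
  refine ⟨fun hx => ?_, fun hx => ?_⟩
  · congr 1
    refine integral_congr fun y hy => ?_
    rw [uIcc_of_le (by linarith)] at hy
    simp only [min_eq_right (by linarith [hy.2] : y ≤ 1 - x)]
  · rw [integral_comp_min_const (by linarith) (by linarith)
      ((hp.mono (Icc_subset_Icc_right (by linarith))).intervalIntegrable_of_Icc (by linarith)),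
      smul_eq_mul]
    ring
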